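/- For every x₀ ∈ E and y, z ∈ E, writing x_s = φ_s(x₀), there exists a unique continuous a : [0,∞) → E with a(0) = 0 and a(t) = ∫₀^t Λ_{t−s} { DN(x_s)[a(s)] + D²N(x_s)[ Dφ_s(x₀)[y], Dφ_s(x₀)[z] ] } ds for all t ≥ 0. Moreover, for every t ≥ 0 the map x ↦ φ_t(x) is twice Fréchet differentiable at x₀ in the topology of E, and D²φ_t(x₀)[y,z] = a(t). -/

import Mathlib

/-
Every derivative of the flow is the mild solution of a linear equation
`v t = g t + ∫₀ᵗ S (t - s) (c s (v s)) ds` with a bounded continuous coefficient `c`.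
Such equations are solved by their Picard series, and Grönwall's inequality makes the solution
unique and linear in `g`. Differentiability comes from the same inequality applied to Taylor
remainders: the remainder `r` of `φ t` (or of `x ↦ fderiv ℝ (φ t) x`) satisfies
`r = ∫₀ᵗ S (t - s) (N' (φ s x) (r s) + O(‖h‖²)) ds`, whence `‖r‖ = O(‖h‖²)`. The second
derivative obtained this way is the solution `a` of the statement; its bilinearity and its
uniqueness both follow from uniqueness for the linear equation.
-/

open MeasureTheory Filter Set
open scoped Topology

noncomputable section

section Analysis

variable {E F : Type*} [NormedAddCommGroup E] [NormedSpace ℝ E] [NormedAddCommGroup F]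
  [NormedSpace ℝ F]

theorem continuous_apply_of_norm_le {X Y : Type*} [TopologicalSpace X] [TopologicalSpace Y]
    {T : Y → E →L[ℝ] F} {C : ℝ} (hT : ∀ x, Continuous fun r => T r x) (hC : ∀ r, ‖T r‖ ≤ C)
    {a : X → Y} {g : X → E} (ha : Continuous a) (hg : Continuous g) :
    Continuous fun x => T (a x) (g x) := by
  refine continuous_iff_continuousAt.2 fun x₀ => ?_
  have hsmall : Tendsto (fun x => T (a x) (g x - g x₀)) (𝓝 x₀) (𝓝 0) := by
    refine squeeze_zero_norm (fun x => ((T (a x)).le_opNorm _).trans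
      (mul_le_mul_of_nonneg_right (hC _) (norm_nonneg _))) ?_
    simpa using (tendsto_const_nhds (x := C)).mul ((hg.tendsto x₀).sub_const (g x₀)).norm
  have hmain := ((hT (g x₀)).comp ha).continuousAt (x := x₀)
  simpa [ContinuousAt, map_sub] using hmain.tendsto.add hsmall

theorem le_mul_exp_of_le_add_mul_integral {u : ℝ → ℝ} {T C K : ℝ} (hK : 0 ≤ K)
    (hu : ContinuousOn u (Icc 0 T))
    (hle : ∀ t ∈ Icc 0 T, u t ≤ C + K * ∫ s in (0:ℝ)..t, u s) :
    ∀ t ∈ Icc 0 T, u t ≤ C * Real.exp (K * t) := by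
  intro t ht
  have hT : 0 ≤ T := ht.1.trans ht.2
  -- extend `u` continuously to `ℝ` so that its primitive is differentiable everywhere
  set ũ : ℝ → ℝ := fun s => u (max (min s T) 0)
  have hũ : Continuous ũ := hu.comp_continuous (by fun_prop)
    fun s => ⟨le_max_right _ _, max_le (min_le_right _ _) hT⟩
  have hũu : ∀ s ∈ Icc 0 T, ũ s = u s := fun s hs => by
    simp only [ũ, min_eq_left hs.2, max_eq_left hs.1]
  have hint : ∀ s ∈ Icc 0 T, ∫ r in (0:ℝ)..s, ũ r = ∫ r in (0:ℝ)..s, u r := fun s hs =>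
    intervalIntegral.integral_congr fun r hr => by
      rw [uIcc_of_le hs.1] at hr
      exact hũu r ⟨hr.1, hr.2.trans hs.2⟩
  set F : ℝ → ℝ := fun s => C + K * ∫ r in (0:ℝ)..s, ũ r
  have hF : ∀ s, HasDerivAt F (K * ũ s) s := fun s =>
    ((hũ.integral_hasStrictDerivAt 0 s).hasDerivAt.const_mul K).const_add C
  have hFbound := le_gronwallBound_of_liminf_deriv_right_le (f := F) (f' := fun s => K * ũ s)
    (δ := C) (K := K) (ε := 0) (a := 0) (b := T)
    (fun s _ => (hF s).continuousAt.continuousWithinAt)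
    (fun s _ r hr => ((hF s).hasDerivWithinAt.liminf_right_slope_le hr).mono
      fun z hz => by simpa [slope, smul_eq_mul] using hz)
    (by simp [F]) (fun s hs => by
      have := hle s (Ico_subset_Icc_self hs)
      rw [← hũu s (Ico_subset_Icc_self hs), ← hint s (Ico_subset_Icc_self hs)] at this
      simp only [F, add_zero]
      exact mul_le_mul_of_nonneg_left this hK) t ht
  rw [gronwallBound_ε0, sub_zero] at hFbound
  calc u t ≤ F t := by simpa only [F, hint t ht] using hle t ht
    _ ≤ C * Real.exp (K * t) := hFbound

variable {f : E → F} {C : ℝ}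

theorem norm_sub_sub_fderiv_le (hf : Differentiable ℝ f) (hf' : Differentiable ℝ (fderiv ℝ f))
    (hC : ∀ x, ‖fderiv ℝ (fderiv ℝ f) x‖ ≤ C) (a b : E) :
    ‖f b - f a - fderiv ℝ f a (b - a)‖ ≤ C * ‖b - a‖ ^ 2 := by
  have hC0 : 0 ≤ C := (norm_nonneg (fderiv ℝ (fderiv ℝ f) a)).trans (hC a)
  have hlip : ∀ z, ‖fderiv ℝ f z - fderiv ℝ f a‖ ≤ C * ‖z - a‖ := fun z =>
    convex_univ.norm_image_sub_le_of_norm_fderiv_le (fun x _ => hf' x) (fun x _ => hC x)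
      (mem_univ a) (mem_univ z)
  have := (convex_closedBall a ‖b - a‖).norm_image_sub_le_of_norm_fderiv_le' (fun x _ => hf x)
    (fun z hz => (hlip z).trans (mul_le_mul_of_nonneg_left (mem_closedBall_iff_norm.1 hz) hC0))
    (Metric.mem_closedBall_self (norm_nonneg _)) (mem_closedBall_iff_norm.2 le_rfl)
  rwa [mul_assoc, ← sq] at this

theorem hasFDerivAt_of_norm_sub_le_sq {L : E →L[ℝ] F} {x : E}
    (h : ∀ x', ‖f x' - f x - L (x' - x)‖ ≤ C * ‖x' - x‖ ^ 2) : HasFDerivAt f L x := by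
  rw [hasFDerivAt_iff_isLittleO_nhds_zero]
  refine (Asymptotics.IsBigO.of_bound C (Eventually.of_forall fun h' => ?_)).trans_isLittleO
    (Asymptotics.isLittleO_norm_pow_id one_lt_two)
  simpa using h (x + h')

end Analysis

section Duhamel

variable {E : Type*} [NormedAddCommGroup E] [NormedSpace ℝ E]

structure StronglyContinuousContraction (S : ℝ → E →L[ℝ] E) : Prop where
  continuousOn_apply : ∀ x, ContinuousOn (fun t => S t x) (Ici 0)
  norm_le_one : ∀ t, 0 ≤ t → ‖S t‖ ≤ 1

def duhamel (S : ℝ → E →L[ℝ] E) (f : ℝ → E) (t : ℝ) : E :=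
  ∫ s in (0:ℝ)..t, S (t - s) (f s)

variable {S : ℝ → E →L[ℝ] E} {f g : ℝ → E} {t : ℝ}

theorem duhamel_smul (r : ℝ) : duhamel S (r • f) t = r • duhamel S f t := by
  simp only [duhamel, Pi.smul_apply, map_smul]
  exact intervalIntegral.integral_smul r _

theorem duhamel_congr (ht : 0 ≤ t) (hfg : EqOn f g (Icc 0 t)) : duhamel S f t = duhamel S g t :=
  intervalIntegral.integral_congr fun s hs => by
    rw [uIcc_of_le ht] at hs
    simp only [hfg hs]

namespace StronglyContinuousContraction

theorem norm_apply_le (hS : StronglyContinuousContraction S) (ht : 0 ≤ t) (x : E) :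
    ‖S t x‖ ≤ ‖x‖ :=
  calc ‖S t x‖ ≤ ‖S t‖ * ‖x‖ := (S t).le_opNorm x
    _ ≤ ‖x‖ := mul_le_of_le_one_left (norm_nonneg x) (hS.norm_le_one t ht)

-- A jointly continuous extension of the Duhamel integrand `(t, s) ↦ S (t - s) (f s)`
-- from `0 ≤ s ≤ t` to `ℝ × ℝ`.
theorem continuous_integrand_clamp (hS : StronglyContinuousContraction S)
    (hf : ContinuousOn f (Ici 0)) :
    Continuous fun p : ℝ × ℝ => S (max (p.1 - p.2) 0) (f (max p.2 0)) := by
  have hclamp : ∀ {X : Type} [TopologicalSpace X] {a : X → ℝ}, Continuous a →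
      Continuous fun x => max (a x) 0 := fun ha => ha.max continuous_const
  refine continuous_apply_of_norm_le (T := fun r => S (max r 0)) (C := 1)
    (fun x => (hS.continuousOn_apply x).comp_continuous (hclamp continuous_id)
      fun r => le_max_right r 0)
    (fun r => hS.norm_le_one _ (le_max_right r 0)) (continuous_fst.sub continuous_snd)
    (hf.comp_continuous (hclamp continuous_snd) fun p => le_max_right p.2 0)

theorem continuousOn_integrand (hS : StronglyContinuousContraction S)
    (hf : ContinuousOn f (Ici 0)) (ht : 0 ≤ t) :
    ContinuousOn (fun s => S (t - s) (f s)) (uIcc 0 t) := by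
  have hline : Continuous fun s : ℝ => (t, s) := continuous_const.prodMk continuous_id
  refine ((hS.continuous_integrand_clamp hf).comp hline).continuousOn.congr fun s hs => ?_
  rw [uIcc_of_le ht] at hs
  simp [max_eq_left (sub_nonneg.2 hs.2), max_eq_left hs.1]

theorem intervalIntegrable_integrand (hS : StronglyContinuousContraction S)
    (hf : ContinuousOn f (Ici 0)) (ht : 0 ≤ t) :
    IntervalIntegrable (fun s => S (t - s) (f s)) volume 0 t :=
  (hS.continuousOn_integrand hf ht).intervalIntegrable

theorem continuousOn_duhamel (hS : StronglyContinuousContraction S)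
    (hf : ContinuousOn f (Ici 0)) : ContinuousOn (duhamel S f) (Ici 0) := by
  refine (intervalIntegral.continuous_parametric_intervalIntegral_of_continuous
    (f := fun t s => S (max (t - s) 0) (f (max s 0))) (a₀ := 0) (μ := volume)
    (hS.continuous_integrand_clamp hf) continuous_id).continuousOn.congr fun t ht => ?_
  refine intervalIntegral.integral_congr fun s hs => ?_
  rw [uIcc_of_le ht] at hs
  simp [max_eq_left (sub_nonneg.2 hs.2), max_eq_left hs.1]

theorem duhamel_add (hS : StronglyContinuousContraction S) (hf : ContinuousOn f (Ici 0))
    (hg : ContinuousOn g (Ici 0)) (ht : 0 ≤ t) :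
    duhamel S (f + g) t = duhamel S f t + duhamel S g t := by
  simp only [duhamel, Pi.add_apply, map_add]
  exact intervalIntegral.integral_add (hS.intervalIntegrable_integrand hf ht)
    (hS.intervalIntegrable_integrand hg ht)

theorem duhamel_sub (hS : StronglyContinuousContraction S) (hf : ContinuousOn f (Ici 0))
    (hg : ContinuousOn g (Ici 0)) (ht : 0 ≤ t) :
    duhamel S (f - g) t = duhamel S f t - duhamel S g t := by
  simp only [duhamel, Pi.sub_apply, map_sub]
  exact intervalIntegral.integral_sub (hS.intervalIntegrable_integrand hf ht)
    (hS.intervalIntegrable_integrand hg ht)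

theorem norm_duhamel_le (hS : StronglyContinuousContraction S) {b : ℝ → ℝ} (ht : 0 ≤ t)
    (hb : IntervalIntegrable b volume 0 t) (hfb : ∀ s ∈ Icc 0 t, ‖f s‖ ≤ b s) :
    ‖duhamel S f t‖ ≤ ∫ s in (0:ℝ)..t, b s := by
  refine intervalIntegral.norm_integral_le_of_norm_le ht (ae_of_all _ fun s hs => ?_) hb
  exact (hS.norm_apply_le (sub_nonneg.2 hs.2) _).trans (hfb s (Ioc_subset_Icc_self hs))

theorem norm_duhamel_le_mul (hS : StronglyContinuousContraction S) {B : ℝ} (ht : 0 ≤ t)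
    (hfB : ∀ s ∈ Icc 0 t, ‖f s‖ ≤ B) : ‖duhamel S f t‖ ≤ t * B := by
  simpa using hS.norm_duhamel_le ht intervalIntegrable_const hfB

theorem norm_le_of_eq_add_duhamel (hS : StronglyContinuousContraction S) {v q : ℝ → E}
    {T C D K : ℝ} (hK : 0 ≤ K) (hD : 0 ≤ D) (hv : ContinuousOn v (Icc 0 T))
    (hg : ∀ t ∈ Icc 0 T, ‖g t‖ ≤ C) (hq : ∀ t ∈ Icc 0 T, ‖q t‖ ≤ K * ‖v t‖ + D)
    (heq : ∀ t ∈ Icc 0 T, v t = g t + duhamel S q t) :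
    ∀ t ∈ Icc 0 T, ‖v t‖ ≤ (C + D * T) * Real.exp (K * T) := by
  intro t ht
  have hCD : 0 ≤ C + D * T :=
    add_nonneg ((norm_nonneg _).trans (hg t ht)) (mul_nonneg hD (ht.1.trans ht.2))
  refine (le_mul_exp_of_le_add_mul_integral hK hv.norm (fun τ hτ => ?_) t ht).trans
    (mul_le_mul_of_nonneg_left (Real.exp_le_exp.2 (mul_le_mul_of_nonneg_left ht.2 hK)) hCD)
  have hvτ : IntervalIntegrable (fun s => ‖v s‖) volume 0 τ :=
    (hv.norm.mono (uIcc_of_le hτ.1 ▸ Icc_subset_Icc_right hτ.2)).intervalIntegrable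
  calc ‖v τ‖ ≤ ‖g τ‖ + ‖duhamel S q τ‖ := heq τ hτ ▸ norm_add_le _ _
    _ ≤ C + ∫ s in (0:ℝ)..τ, (K * ‖v s‖ + D) :=
        add_le_add (hg τ hτ) (hS.norm_duhamel_le hτ.1
          ((hvτ.const_mul K).add intervalIntegrable_const)
          fun s hs => hq s ⟨hs.1, hs.2.trans hτ.2⟩)
    _ = C + D * τ + K * ∫ s in (0:ℝ)..τ, ‖v s‖ := by
        rw [intervalIntegral.integral_add (hvτ.const_mul K) intervalIntegrable_const,
          intervalIntegral.integral_const_mul, intervalIntegral.integral_const, smul_eq_mul]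
        ring
    _ ≤ C + D * T + K * ∫ s in (0:ℝ)..τ, ‖v s‖ := by
        gcongr; exact hτ.2

theorem sub_eq_add_duhamel_sub (hS : StronglyContinuousContraction S) {f₁ f₂ : ℝ → E}
    (hf₁ : ContinuousOn f₁ (Ici 0)) (hf₂ : ContinuousOn f₂ (Ici 0)) (ht : 0 ≤ t) {v₁ v₂ a₁ a₂ : E}
    (h₁ : v₁ = a₁ + duhamel S f₁ t) (h₂ : v₂ = a₂ + duhamel S f₂ t) :
    v₁ - v₂ = (a₁ - a₂) + duhamel S (f₁ - f₂) t := by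
  rw [h₁, h₂, hS.duhamel_sub hf₁ hf₂ ht]
  abel

theorem isLinearMap_duhamel {P : Type*} [AddCommGroup P] [Module ℝ P]
    (hS : StronglyContinuousContraction S) {F : P → ℝ → E}
    (hF : ∀ p, ContinuousOn (F p) (Ici 0)) (hlin : ∀ s, 0 ≤ s → IsLinearMap ℝ fun p => F p s)
    (ht : 0 ≤ t) : IsLinearMap ℝ fun p => duhamel S (F p) t where
  map_add p q := by
    rw [duhamel_congr ht fun s hs => (hlin s hs.1).map_add p q]
    exact hS.duhamel_add (hF p) (hF q) ht
  map_smul r p := by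
    rw [duhamel_congr ht fun s hs => (hlin s hs.1).map_smul r p]
    exact duhamel_smul r

end StronglyContinuousContraction

end Duhamel

section MildSolution

variable {E : Type*} [NormedAddCommGroup E] [NormedSpace ℝ E]
variable {S : ℝ → E →L[ℝ] E} {c : ℝ → E →L[ℝ] E} {g g' v v' : ℝ → E} {t : ℝ}

structure IsMildSolution (S c : ℝ → E →L[ℝ] E) (g v : ℝ → E) : Prop where
  continuousOn : ContinuousOn v (Ici 0)
  eq : ∀ t, 0 ≤ t → v t = g t + duhamel S (fun s => c s (v s)) t

def picardIter (S c : ℝ → E →L[ℝ] E) (g : ℝ → E) : ℕ → ℝ → E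
  | 0 => g
  | n + 1 => duhamel S fun s => c s (picardIter S c g n s)

def mildSolution (S c : ℝ → E →L[ℝ] E) (g : ℝ → E) (t : ℝ) : E :=
  ∑' n, picardIter S c g n t

namespace IsMildSolution

theorem congr (hv : IsMildSolution S c g v) (hg : EqOn g g' (Ici 0)) (hvv' : EqOn v v' (Ici 0)) :
    IsMildSolution S c g' v' where
  continuousOn := hv.continuousOn.congr hvv'.symm
  eq t ht := by
    rw [← hvv' ht, ← hg ht, hv.eq t ht]
    exact congrArg _ (duhamel_congr ht fun s hs => by simp only [hvv' hs.1])

theorem add (hS : StronglyContinuousContraction S) (hc : ContinuousOn c (Ici 0))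
    (hv : IsMildSolution S c g v) (hv' : IsMildSolution S c g' v') :
    IsMildSolution S c (g + g') (v + v') where
  continuousOn := hv.continuousOn.add hv'.continuousOn
  eq t ht := by
    have hsum : (fun s => c s ((v + v') s)) = (fun s => c s (v s)) + fun s => c s (v' s) := by
      ext s; simp
    rw [hsum, hS.duhamel_add (hc.clm_apply hv.continuousOn) (hc.clm_apply hv'.continuousOn) ht,
      Pi.add_apply, Pi.add_apply, hv.eq t ht, hv'.eq t ht]
    abel

theorem const_smul (hv : IsMildSolution S c g v) (r : ℝ) :
    IsMildSolution S c (r • g) (r • v) where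
  continuousOn := hv.continuousOn.const_smul r
  eq t ht := by
    have hsmul : (fun s => c s ((r • v) s)) = r • fun s => c s (v s) := by ext s; simp
    rw [hsmul, duhamel_smul, Pi.smul_apply, Pi.smul_apply, hv.eq t ht, smul_add]

theorem norm_le (hS : StronglyContinuousContraction S) (hv : IsMildSolution S c g v)
    {T C K : ℝ} (hc : ∀ s ∈ Icc 0 T, ‖c s‖ ≤ K) (hg : ∀ s ∈ Icc 0 T, ‖g s‖ ≤ C) :
    ∀ t ∈ Icc 0 T, ‖v t‖ ≤ C * Real.exp (K * T) := by
  intro t ht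
  have hK : 0 ≤ K := (norm_nonneg _).trans (hc t ht)
  simpa using hS.norm_le_of_eq_add_duhamel hK le_rfl (hv.continuousOn.mono Icc_subset_Ici_self)
    hg (fun s hs => by
      simpa using ((c s).le_opNorm _).trans (mul_le_mul_of_nonneg_right (hc s hs) (norm_nonneg _)))
    (fun s hs => hv.eq s hs.1) t ht

theorem eqOn (hS : StronglyContinuousContraction S) (hc : ContinuousOn c (Ici 0))
    (hv : IsMildSolution S c g v) (hv' : IsMildSolution S c g' v') (hg : EqOn g g' (Ici 0)) :
    EqOn v v' (Ici 0) := by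
  intro t ht
  obtain ⟨K, hK⟩ := isCompact_Icc.exists_bound_of_continuousOn
    (hc.mono (Icc_subset_Ici_self : Icc 0 t ⊆ Ici 0))
  have hd := (hv.add hS hc (hv'.const_smul (-1))).congr (g' := 0)
    (fun s hs => by simp [hg hs]) fun _ _ => rfl
  simpa [sub_eq_zero, ← sub_eq_add_neg] using
    hd.norm_le hS hK (fun _ _ => norm_zero.le) t ⟨ht, le_rfl⟩

end IsMildSolution

namespace StronglyContinuousContraction

theorem isMildSolution_duhamel_iff (hS : StronglyContinuousContraction S)
    (hc : ContinuousOn c (Ici 0)) {f : ℝ → E} (hf : ContinuousOn f (Ici 0))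
    (hv : ContinuousOn v (Ici 0)) :
    IsMildSolution S c (duhamel S f) v ↔
      ∀ t, 0 ≤ t → v t = duhamel S (fun s => c s (v s) + f s) t := by
  have hsplit : ∀ t, 0 ≤ t →
      duhamel S (fun s => c s (v s) + f s) t = duhamel S f t + duhamel S (fun s => c s (v s)) t :=
    fun t ht => by
      rw [add_comm (duhamel S f t)]
      exact hS.duhamel_add (f := fun s => c s (v s)) (hc.clm_apply hv) hf ht
  exact ⟨fun h t ht => by rw [hsplit t ht, ← h.eq t ht], fun h => ⟨hv, fun t ht => by
    rw [← hsplit t ht, ← h t ht]⟩⟩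

theorem continuousOn_picardIter (hS : StronglyContinuousContraction S)
    (hc : ContinuousOn c (Ici 0)) (hg : ContinuousOn g (Ici 0)) :
    ∀ n, ContinuousOn (picardIter S c g n) (Ici 0)
  | 0 => hg
  | n + 1 => hS.continuousOn_duhamel (hc.clm_apply (continuousOn_picardIter hS hc hg n))

theorem norm_picardIter_le (hS : StronglyContinuousContraction S) {T C K : ℝ}
    (hc : ∀ s ∈ Icc 0 T, ‖c s‖ ≤ K) (hg : ∀ s ∈ Icc 0 T, ‖g s‖ ≤ C) :
    ∀ n, ∀ t ∈ Icc 0 T, ‖picardIter S c g n t‖ ≤ C * (K * t) ^ n / n.factorial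
  | 0, t, ht => by simpa [picardIter] using hg t ht
  | n + 1, t, ht => by
    have hint : ∫ s in (0:ℝ)..t, K * (C * (K * s) ^ n / n.factorial) =
        C * (K * t) ^ (n + 1) / (n + 1).factorial := by
      have hfun : (fun s : ℝ => K * (C * (K * s) ^ n / n.factorial)) =
          fun s => C * K ^ (n + 1) / n.factorial * s ^ n := by
        ext s; ring
      rw [hfun, intervalIntegral.integral_const_mul, integral_pow]
      push_cast [Nat.factorial_succ]
      field_simp
      ring
    refine (hS.norm_duhamel_le ht.1 (Continuous.intervalIntegrable (by fun_prop) _ _)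
      fun s hs => ?_).trans hint.le
    have hs' : s ∈ Icc 0 T := ⟨hs.1, hs.2.trans ht.2⟩
    exact ((c s).le_opNorm _).trans (mul_le_mul (hc s hs')
      (norm_picardIter_le hS hc hg n s hs') (norm_nonneg _) ((norm_nonneg _).trans (hc s hs')))

theorem norm_picardIter_le' (hS : StronglyContinuousContraction S) {T C K : ℝ}
    (hc : ∀ s ∈ Icc 0 T, ‖c s‖ ≤ K) (hg : ∀ s ∈ Icc 0 T, ‖g s‖ ≤ C) (n : ℕ) {t : ℝ}
    (ht : t ∈ Icc 0 T) : ‖picardIter S c g n t‖ ≤ C * ((K * T) ^ n / n.factorial) := by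
  have hK : 0 ≤ K := (norm_nonneg _).trans (hc t ht)
  have hC : 0 ≤ C := (norm_nonneg _).trans (hg t ht)
  rw [← mul_div_assoc]
  refine (hS.norm_picardIter_le hc hg n t ht).trans ?_
  gcongr
  exacts [mul_nonneg hK ht.1, ht.2]

variable [CompleteSpace E]

theorem isMildSolution_mildSolution (hS : StronglyContinuousContraction S)
    (hc : ContinuousOn c (Ici 0)) (hg : ContinuousOn g (Ici 0)) :
    IsMildSolution S c g (mildSolution S c g) := by
  have hp := hS.continuousOn_picardIter hc hg
  have hbounds : ∀ T, ∃ C K, (∀ s ∈ Icc 0 T, ‖c s‖ ≤ K) ∧ ∀ s ∈ Icc 0 T, ‖g s‖ ≤ C := by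
    intro T
    obtain ⟨K, hK⟩ := isCompact_Icc.exists_bound_of_continuousOn (hc.mono Icc_subset_Ici_self)
    obtain ⟨C, hC⟩ := isCompact_Icc.exists_bound_of_continuousOn (hg.mono Icc_subset_Ici_self)
    exact ⟨C, K, hK, hC⟩
  have hsum : ∀ {T C K : ℝ}, (∀ s ∈ Icc 0 T, ‖c s‖ ≤ K) → (∀ s ∈ Icc 0 T, ‖g s‖ ≤ C) →
      Summable fun n => C * ((K * T) ^ n / n.factorial) :=
    fun _ _ => (Real.summable_pow_div_factorial _).mul_left _
  constructor
  · intro t₀ ht₀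
    obtain ⟨C, K, hK, hC⟩ := hbounds (t₀ + 1)
    have hcont : ContinuousOn (mildSolution S c g) (Icc 0 (t₀ + 1)) :=
      continuousOn_tsum (fun n => (hp n).mono Icc_subset_Ici_self) (hsum hK hC)
        fun n t ht => hS.norm_picardIter_le' hK hC n ht
    exact (hcont t₀ ⟨ht₀, by linarith⟩).mono_of_mem_nhdsWithin
      (inter_mem_nhdsWithin _ (Iic_mem_nhds (by linarith)))
  · intro t ht
    obtain ⟨C, K, hK, hC⟩ := hbounds t
    have hlim : ∀ s ∈ Icc 0 t,
        HasSum (fun n => picardIter S c g n s) (mildSolution S c g s) := fun s hs =>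
      ((hsum hK hC).of_norm_bounded fun n => hS.norm_picardIter_le' hK hC n hs).hasSum
    have htail : HasSum (fun n => picardIter S c g (n + 1) t)
        (duhamel S (fun s => c s (mildSolution S c g s)) t) := by
      refine intervalIntegral.hasSum_integral_of_dominated_convergence
        (fun n _ => K * (C * ((K * t) ^ n / n.factorial)))
        (fun n => ((hS.continuousOn_integrand (hc.clm_apply (hp n)) ht).mono
          uIoc_subset_uIcc).aestronglyMeasurable measurableSet_uIoc)
        (fun n => ae_of_all _ fun s hs => ?_) (ae_of_all _ fun _ _ => (hsum hK hC).mul_left K)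
        intervalIntegrable_const (ae_of_all _ fun s hs => ?_)
      · rw [uIoc_of_le ht] at hs
        have hs' : s ∈ Icc 0 t := Ioc_subset_Icc_self hs
        exact (hS.norm_apply_le (sub_nonneg.2 hs.2) _).trans (((c s).le_opNorm _).trans
          (mul_le_mul (hK s hs') (hS.norm_picardIter_le' hK hC n hs') (norm_nonneg _)
            ((norm_nonneg _).trans (hK s hs'))))
      · rw [uIoc_of_le ht] at hs
        exact (hlim s (Ioc_subset_Icc_self hs)).mapL ((S (t - s)).comp (c s))
    rw [mildSolution, (hlim t ⟨ht, le_rfl⟩).summable.tsum_eq_zero_add, htail.tsum_eq]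
    rfl

theorem isLinearMap_mildSolution {P : Type*} [AddCommGroup P] [Module ℝ P]
    (hS : StronglyContinuousContraction S) (hc : ContinuousOn c (Ici 0)) {G : P → ℝ → E}
    (hG : ∀ p, ContinuousOn (G p) (Ici 0)) (hlin : ∀ s, 0 ≤ s → IsLinearMap ℝ fun p => G p s)
    (ht : 0 ≤ t) : IsLinearMap ℝ fun p => mildSolution S c (G p) t where
  map_add p q := (hS.isMildSolution_mildSolution hc (hG (p + q))).eqOn hS hc
    ((hS.isMildSolution_mildSolution hc (hG p)).add hS hc
      (hS.isMildSolution_mildSolution hc (hG q))) (fun s hs => (hlin s hs).map_add p q) ht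
  map_smul r p := (hS.isMildSolution_mildSolution hc (hG (r • p))).eqOn hS hc
    ((hS.isMildSolution_mildSolution hc (hG p)).const_smul r)
    (fun s hs => (hlin s hs).map_smul r p) ht

end StronglyContinuousContraction

end MildSolution

section Flow

variable {E : Type*} [NormedAddCommGroup E] [NormedSpace ℝ E]
variable {S : ℝ → E →L[ℝ] E} {N : E → E} {K : ℝ} {φ : ℝ → E → E}

structure HasBoundedDerivs (N : E → E) (K : ℝ) : Prop where
  contDiff : ContDiff ℝ 3 N
  norm_fderiv_le : ∀ x, ‖fderiv ℝ N x‖ ≤ K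
  norm_fderiv_fderiv_le : ∀ x, ‖fderiv ℝ (fderiv ℝ N) x‖ ≤ K
  norm_fderiv_fderiv_fderiv_le : ∀ x, ‖fderiv ℝ (fderiv ℝ (fderiv ℝ N)) x‖ ≤ K

namespace HasBoundedDerivs

theorem nonneg (hN : HasBoundedDerivs N K) : 0 ≤ K :=
  (norm_nonneg _).trans (hN.norm_fderiv_le 0)

theorem differentiable (hN : HasBoundedDerivs N K) : Differentiable ℝ N :=
  hN.contDiff.differentiable (by norm_num)

theorem differentiable_fderiv (hN : HasBoundedDerivs N K) : Differentiable ℝ (fderiv ℝ N) :=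
  (hN.contDiff.fderiv_right (m := 2) (by norm_num)).differentiable (by norm_num)

theorem differentiable_fderiv_fderiv (hN : HasBoundedDerivs N K) :
    Differentiable ℝ (fderiv ℝ (fderiv ℝ N)) :=
  ((hN.contDiff.fderiv_right (m := 2) (by norm_num)).fderiv_right (m := 1)
    (by norm_num)).differentiable (by norm_num)

theorem norm_sub_le (hN : HasBoundedDerivs N K) (a b : E) : ‖N b - N a‖ ≤ K * ‖b - a‖ :=
  convex_univ.norm_image_sub_le_of_norm_fderiv_le (fun x _ => hN.differentiable x)
    (fun x _ => hN.norm_fderiv_le x) (mem_univ a) (mem_univ b)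

theorem norm_fderiv_sub_le (hN : HasBoundedDerivs N K) (a b : E) :
    ‖fderiv ℝ N b - fderiv ℝ N a‖ ≤ K * ‖b - a‖ :=
  convex_univ.norm_image_sub_le_of_norm_fderiv_le (fun x _ => hN.differentiable_fderiv x)
    (fun x _ => hN.norm_fderiv_fderiv_le x) (mem_univ a) (mem_univ b)

theorem norm_sub_sub_fderiv_le (hN : HasBoundedDerivs N K) (a b : E) :
    ‖N b - N a - fderiv ℝ N a (b - a)‖ ≤ K * ‖b - a‖ ^ 2 :=
  _root_.norm_sub_sub_fderiv_le hN.differentiable hN.differentiable_fderiv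
    hN.norm_fderiv_fderiv_le a b

theorem norm_fderiv_sub_sub_le (hN : HasBoundedDerivs N K) (a b : E) :
    ‖fderiv ℝ N b - fderiv ℝ N a - fderiv ℝ (fderiv ℝ N) a (b - a)‖ ≤ K * ‖b - a‖ ^ 2 :=
  _root_.norm_sub_sub_fderiv_le hN.differentiable_fderiv hN.differentiable_fderiv_fderiv
    hN.norm_fderiv_fderiv_fderiv_le a b

theorem norm_fderiv_apply_le (hN : HasBoundedDerivs N K) (p a : E) :
    ‖fderiv ℝ N p a‖ ≤ K * ‖a‖ :=
  ((fderiv ℝ N p).le_opNorm a).trans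
    (mul_le_mul_of_nonneg_right (hN.norm_fderiv_le p) (norm_nonneg a))

theorem norm_fderiv_fderiv_apply_le (hN : HasBoundedDerivs N K) (p a b : E) :
    ‖fderiv ℝ (fderiv ℝ N) p a b‖ ≤ K * ‖a‖ * ‖b‖ := by
  refine ((fderiv ℝ (fderiv ℝ N) p).le_opNorm₂ a b).trans ?_
  gcongr
  exact hN.norm_fderiv_fderiv_le p

end HasBoundedDerivs

structure IsMildFlow (S : ℝ → E →L[ℝ] E) (N : E → E) (φ : ℝ → E → E) : Prop where
  continuousOn : ∀ x, ContinuousOn (fun t => φ t x) (Ici 0)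
  eq : ∀ x t, 0 ≤ t → φ t x = S t x + duhamel S (fun s => N (φ s x)) t

def firstVariation (S : ℝ → E →L[ℝ] E) (N : E → E) (φ : ℝ → E → E) (x y : E) : ℝ → E :=
  mildSolution S (fun s => fderiv ℝ N (φ s x)) fun t => S t y

def secondVariation (S : ℝ → E →L[ℝ] E) (N : E → E) (φ : ℝ → E → E) (x u v : E) : ℝ → E :=
  mildSolution S (fun s => fderiv ℝ N (φ s x)) <| duhamel S fun s =>
    fderiv ℝ (fderiv ℝ N) (φ s x) (fderiv ℝ (φ s) x u) (fderiv ℝ (φ s) x v)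

namespace IsMildFlow

theorem continuousOn_comp (hφ : IsMildFlow S N φ) (hN : HasBoundedDerivs N K) (x : E) :
    ContinuousOn (fun s => N (φ s x)) (Ici 0) :=
  hN.differentiable.continuous.comp_continuousOn (hφ.continuousOn x)

theorem continuousOn_fderiv_comp (hφ : IsMildFlow S N φ) (hN : HasBoundedDerivs N K) (x : E) :
    ContinuousOn (fun s => fderiv ℝ N (φ s x)) (Ici 0) :=
  hN.differentiable_fderiv.continuous.comp_continuousOn (hφ.continuousOn x)

theorem norm_sub_le (hφ : IsMildFlow S N φ) (hS : StronglyContinuousContraction S)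
    (hN : HasBoundedDerivs N K) {T t : ℝ} (ht : t ∈ Icc 0 T) (x x' : E) :
    ‖φ t x' - φ t x‖ ≤ ‖x' - x‖ * Real.exp (K * T) := by
  simpa using hS.norm_le_of_eq_add_duhamel (v := fun t => φ t x' - φ t x)
    (g := fun t => S t (x' - x)) (D := 0) hN.nonneg le_rfl
    (((hφ.continuousOn x').sub (hφ.continuousOn x)).mono Icc_subset_Ici_self)
    (fun s hs => hS.norm_apply_le hs.1 _)
    (fun s hs => by simpa using hN.norm_sub_le (φ s x) (φ s x'))
    (fun τ hτ => (hS.sub_eq_add_duhamel_sub (hφ.continuousOn_comp hN x')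
      (hφ.continuousOn_comp hN x) hτ.1 (hφ.eq x' τ hτ.1) (hφ.eq x τ hτ.1)).trans
        (by rw [map_sub]; rfl)) t ht

variable [CompleteSpace E]

theorem isMildSolution_firstVariation (hφ : IsMildFlow S N φ)
    (hS : StronglyContinuousContraction S) (hN : HasBoundedDerivs N K) (x y : E) :
    IsMildSolution S (fun s => fderiv ℝ N (φ s x)) (fun t => S t y) (firstVariation S N φ x y) :=
  hS.isMildSolution_mildSolution (hφ.continuousOn_fderiv_comp hN x) (hS.continuousOn_apply y)

theorem isBoundedLinearMap_firstVariation (hφ : IsMildFlow S N φ)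
    (hS : StronglyContinuousContraction S) (hN : HasBoundedDerivs N K) (x : E) {t : ℝ}
    (ht : 0 ≤ t) : IsBoundedLinearMap ℝ fun y => firstVariation S N φ x y t where
  toIsLinearMap := hS.isLinearMap_mildSolution (hφ.continuousOn_fderiv_comp hN x)
    hS.continuousOn_apply (fun s _ => ⟨map_add (S s), map_smul (S s)⟩) ht
  bound := ⟨Real.exp (K * t), Real.exp_pos _, fun y => by
    rw [mul_comm]
    exact (hφ.isMildSolution_firstVariation hS hN x y).norm_le hS
      (fun s _ => hN.norm_fderiv_le _) (fun s hs => hS.norm_apply_le hs.1 y) t ⟨ht, le_rfl⟩⟩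

theorem norm_sub_sub_firstVariation_le (hφ : IsMildFlow S N φ)
    (hS : StronglyContinuousContraction S) (hN : HasBoundedDerivs N K) {T t : ℝ}
    (ht : t ∈ Icc 0 T) (x x' : E) :
    ‖φ t x' - φ t x - firstVariation S N φ x (x' - x) t‖ ≤
      K * T * Real.exp (K * T) ^ 3 * ‖x' - x‖ ^ 2 := by
  set M := Real.exp (K * T)
  set w := firstVariation S N φ x (x' - x)
  have hw := hφ.isMildSolution_firstVariation hS hN x (x' - x)
  have hc := hφ.continuousOn_fderiv_comp hN x
  have heq : ∀ τ ∈ Icc 0 T, φ τ x' - φ τ x - w τ = 0 + duhamel S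
      (((fun s => N (φ s x')) - fun s => N (φ s x)) - fun s => fderiv ℝ N (φ s x) (w s)) τ := by
    intro τ hτ
    have hφτ := hS.sub_eq_add_duhamel_sub (hφ.continuousOn_comp hN x')
      (hφ.continuousOn_comp hN x) hτ.1 (hφ.eq x' τ hτ.1) (hφ.eq x τ hτ.1)
    rw [hS.sub_eq_add_duhamel_sub ((hφ.continuousOn_comp hN x').sub (hφ.continuousOn_comp hN x))
      (hc.clm_apply hw.continuousOn) hτ.1 hφτ (hw.eq τ hτ.1), map_sub, sub_self]
  have hq : ∀ s ∈ Icc 0 T, ‖N (φ s x') - N (φ s x) - fderiv ℝ N (φ s x) (w s)‖ ≤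
      K * ‖φ s x' - φ s x - w s‖ + K * (‖x' - x‖ * M) ^ 2 := by
    intro s hs
    calc _ = ‖fderiv ℝ N (φ s x) (φ s x' - φ s x - w s) +
          (N (φ s x') - N (φ s x) - fderiv ℝ N (φ s x) (φ s x' - φ s x))‖ := by
          simp only [map_sub]; abel_nf
      _ ≤ K * ‖φ s x' - φ s x - w s‖ + K * ‖φ s x' - φ s x‖ ^ 2 :=
          norm_add_le_of_le (hN.norm_fderiv_apply_le _ _) (hN.norm_sub_sub_fderiv_le _ _)
      _ ≤ _ := by gcongr; exacts [hN.nonneg, hφ.norm_sub_le hS hN hs x x']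
  calc _ ≤ (0 + K * (‖x' - x‖ * M) ^ 2 * T) * M :=
        hS.norm_le_of_eq_add_duhamel (v := fun t => φ t x' - φ t x - w t) hN.nonneg
          (mul_nonneg hN.nonneg (sq_nonneg _)) ((((hφ.continuousOn x').sub (hφ.continuousOn x)).sub
            hw.continuousOn).mono Icc_subset_Ici_self) (fun _ _ => norm_zero.le) hq heq t ht
    _ = _ := by ring

theorem hasFDerivAt (hφ : IsMildFlow S N φ) (hS : StronglyContinuousContraction S)
    (hN : HasBoundedDerivs N K) (x : E) {t : ℝ} (ht : 0 ≤ t) :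
    HasFDerivAt (φ t) (hφ.isBoundedLinearMap_firstVariation hS hN x ht).toContinuousLinearMap x :=
  hasFDerivAt_of_norm_sub_le_sq fun x' => hφ.norm_sub_sub_firstVariation_le hS hN ⟨ht, le_rfl⟩ x x'

theorem fderiv_apply (hφ : IsMildFlow S N φ) (hS : StronglyContinuousContraction S)
    (hN : HasBoundedDerivs N K) {t : ℝ} (ht : 0 ≤ t) (x y : E) :
    fderiv ℝ (φ t) x y = firstVariation S N φ x y t := by
  rw [(hφ.hasFDerivAt hS hN x ht).fderiv]
  rfl

theorem isMildSolution_fderiv (hφ : IsMildFlow S N φ) (hS : StronglyContinuousContraction S)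
    (hN : HasBoundedDerivs N K) (x y : E) :
    IsMildSolution S (fun s => fderiv ℝ N (φ s x)) (fun t => S t y)
      (fun t => fderiv ℝ (φ t) x y) :=
  (hφ.isMildSolution_firstVariation hS hN x y).congr (fun _ _ => rfl)
    fun _ ht => (hφ.fderiv_apply hS hN ht x y).symm

theorem norm_fderiv_apply_le (hφ : IsMildFlow S N φ) (hS : StronglyContinuousContraction S)
    (hN : HasBoundedDerivs N K) {T t : ℝ} (ht : t ∈ Icc 0 T) (x y : E) :
    ‖fderiv ℝ (φ t) x y‖ ≤ ‖y‖ * Real.exp (K * T) :=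
  (hφ.isMildSolution_fderiv hS hN x y).norm_le hS (fun _ _ => hN.norm_fderiv_le _)
    (fun _ hs => hS.norm_apply_le hs.1 y) t ht

theorem norm_sub_sub_fderiv_le (hφ : IsMildFlow S N φ) (hS : StronglyContinuousContraction S)
    (hN : HasBoundedDerivs N K) {T t : ℝ} (ht : t ∈ Icc 0 T) (x x' : E) :
    ‖φ t x' - φ t x - fderiv ℝ (φ t) x (x' - x)‖ ≤
      K * T * Real.exp (K * T) ^ 3 * ‖x' - x‖ ^ 2 := by
  rw [hφ.fderiv_apply hS hN ht.1]
  exact hφ.norm_sub_sub_firstVariation_le hS hN ht x x'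

theorem norm_fderiv_sub_le (hφ : IsMildFlow S N φ) (hS : StronglyContinuousContraction S)
    (hN : HasBoundedDerivs N K) {T t : ℝ} (ht : t ∈ Icc 0 T) (x x' y : E) :
    ‖fderiv ℝ (φ t) x' y - fderiv ℝ (φ t) x y‖ ≤
      K * T * Real.exp (K * T) ^ 3 * ‖x' - x‖ * ‖y‖ := by
  set M := Real.exp (K * T)
  have hD := hφ.isMildSolution_fderiv hS hN x y
  have hD' := hφ.isMildSolution_fderiv hS hN x' y
  have heq : ∀ τ ∈ Icc 0 T, fderiv ℝ (φ τ) x' y - fderiv ℝ (φ τ) x y = 0 + duhamel S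
      ((fun s => fderiv ℝ N (φ s x') (fderiv ℝ (φ s) x' y)) -
        fun s => fderiv ℝ N (φ s x) (fderiv ℝ (φ s) x y)) τ := by
    intro τ hτ
    rw [hS.sub_eq_add_duhamel_sub ((hφ.continuousOn_fderiv_comp hN x').clm_apply hD'.continuousOn)
      ((hφ.continuousOn_fderiv_comp hN x).clm_apply hD.continuousOn) hτ.1 (hD'.eq τ hτ.1)
      (hD.eq τ hτ.1), sub_self]
  have hq : ∀ s ∈ Icc 0 T,
      ‖fderiv ℝ N (φ s x') (fderiv ℝ (φ s) x' y) - fderiv ℝ N (φ s x) (fderiv ℝ (φ s) x y)‖ ≤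
        K * ‖fderiv ℝ (φ s) x' y - fderiv ℝ (φ s) x y‖ + K * (‖x' - x‖ * M) * (‖y‖ * M) := by
    intro s hs
    calc _ = ‖fderiv ℝ N (φ s x) (fderiv ℝ (φ s) x' y - fderiv ℝ (φ s) x y) +
          (fderiv ℝ N (φ s x') - fderiv ℝ N (φ s x)) (fderiv ℝ (φ s) x' y)‖ := by
          simp only [map_sub, sub_apply]; abel_nf
      _ ≤ K * ‖fderiv ℝ (φ s) x' y - fderiv ℝ (φ s) x y‖ +
          K * ‖φ s x' - φ s x‖ * ‖fderiv ℝ (φ s) x' y‖ :=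
          norm_add_le_of_le (hN.norm_fderiv_apply_le _ _)
            ((ContinuousLinearMap.le_opNorm _ _).trans
              (mul_le_mul_of_nonneg_right (hN.norm_fderiv_sub_le _ _) (norm_nonneg _)))
      _ ≤ _ := add_le_add_right (mul_le_mul
          (mul_le_mul_of_nonneg_left (hφ.norm_sub_le hS hN hs x x') hN.nonneg)
          (hφ.norm_fderiv_apply_le hS hN hs x' y) (norm_nonneg _)
          (mul_nonneg hN.nonneg (by positivity))) _
  calc _ ≤ (0 + K * (‖x' - x‖ * M) * (‖y‖ * M) * T) * M :=
        hS.norm_le_of_eq_add_duhamel (v := fun t => fderiv ℝ (φ t) x' y - fderiv ℝ (φ t) x y)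
          hN.nonneg (by have := hN.nonneg; positivity)
          ((hD'.continuousOn.sub hD.continuousOn).mono Icc_subset_Ici_self)
          (fun _ _ => norm_zero.le) hq heq t ht
    _ = _ := by ring

theorem continuousOn_fderiv_fderiv_comp (hφ : IsMildFlow S N φ)
    (hS : StronglyContinuousContraction S) (hN : HasBoundedDerivs N K) (x u v : E) :
    ContinuousOn (fun s => fderiv ℝ (fderiv ℝ N) (φ s x) (fderiv ℝ (φ s) x u)
      (fderiv ℝ (φ s) x v)) (Ici 0) :=
  ((hN.differentiable_fderiv_fderiv.continuous.comp_continuousOn (hφ.continuousOn x)).clm_apply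
    (hφ.isMildSolution_fderiv hS hN x u).continuousOn).clm_apply
    (hφ.isMildSolution_fderiv hS hN x v).continuousOn

theorem isMildSolution_secondVariation (hφ : IsMildFlow S N φ)
    (hS : StronglyContinuousContraction S) (hN : HasBoundedDerivs N K) (x u v : E) :
    IsMildSolution S (fun s => fderiv ℝ N (φ s x)) (duhamel S fun s =>
      fderiv ℝ (fderiv ℝ N) (φ s x) (fderiv ℝ (φ s) x u) (fderiv ℝ (φ s) x v))
      (secondVariation S N φ x u v) :=
  hS.isMildSolution_mildSolution (hφ.continuousOn_fderiv_comp hN x)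
    (hS.continuousOn_duhamel (hφ.continuousOn_fderiv_fderiv_comp hS hN x u v))

theorem norm_secondVariation_le (hφ : IsMildFlow S N φ) (hS : StronglyContinuousContraction S)
    (hN : HasBoundedDerivs N K) {T t : ℝ} (ht : t ∈ Icc 0 T) (x u v : E) :
    ‖secondVariation S N φ x u v t‖ ≤ K * T * Real.exp (K * T) ^ 3 * ‖u‖ * ‖v‖ := by
  set M := Real.exp (K * T)
  have hf : ∀ s ∈ Icc 0 T, ‖fderiv ℝ (fderiv ℝ N) (φ s x) (fderiv ℝ (φ s) x u)
      (fderiv ℝ (φ s) x v)‖ ≤ K * (‖u‖ * M) * (‖v‖ * M) := fun s hs =>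
    (hN.norm_fderiv_fderiv_apply_le _ _ _).trans (mul_le_mul (mul_le_mul_of_nonneg_left
      (hφ.norm_fderiv_apply_le hS hN hs x u) hN.nonneg) (hφ.norm_fderiv_apply_le hS hN hs x v)
      (norm_nonneg _) (mul_nonneg hN.nonneg (by positivity)))
  have hg : ∀ s ∈ Icc 0 T, ‖duhamel S (fun s => fderiv ℝ (fderiv ℝ N) (φ s x)
      (fderiv ℝ (φ s) x u) (fderiv ℝ (φ s) x v)) s‖ ≤ T * (K * (‖u‖ * M) * (‖v‖ * M)) :=
    fun s hs => (hS.norm_duhamel_le_mul hs.1 fun r hr => hf r ⟨hr.1, hr.2.trans hs.2⟩).trans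
      (mul_le_mul_of_nonneg_right hs.2 ((norm_nonneg _).trans (hf s hs)))
  calc _ ≤ T * (K * (‖u‖ * M) * (‖v‖ * M)) * M :=
        (hφ.isMildSolution_secondVariation hS hN x u v).norm_le hS
          (fun _ _ => hN.norm_fderiv_le _) hg t ht
    _ = _ := by ring

theorem isBoundedBilinearMap_secondVariation (hφ : IsMildFlow S N φ)
    (hS : StronglyContinuousContraction S) (hN : HasBoundedDerivs N K) (x : E) {t : ℝ}
    (ht : 0 ≤ t) : IsBoundedBilinearMap ℝ fun p : E × E => secondVariation S N φ x p.1 p.2 t := by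
  have hlin : ∀ {F : E → ℝ → E}, (∀ u, ContinuousOn (F u) (Ici 0)) →
      (∀ s, IsLinearMap ℝ fun u => F u s) →
      IsLinearMap ℝ fun u => mildSolution S (fun s => fderiv ℝ N (φ s x)) (duhamel S (F u)) t :=
    fun hF hFlin => hS.isLinearMap_mildSolution (hφ.continuousOn_fderiv_comp hN x)
      (fun u => hS.continuousOn_duhamel (hF u))
      (fun _ hs => hS.isLinearMap_duhamel hF (fun s _ => hFlin s) hs) ht
  have hleft := fun v => hlin (fun u => hφ.continuousOn_fderiv_fderiv_comp hS hN x u v)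
    fun s => ⟨fun _ _ => by simp, fun _ _ => by simp⟩
  have hright := fun u => hlin (fun v => hφ.continuousOn_fderiv_fderiv_comp hS hN x u v)
    fun s => ⟨fun _ _ => by simp, fun _ _ => by simp⟩
  refine ⟨fun u₁ u₂ v => (hleft v).map_add u₁ u₂, fun r u v => (hleft v).map_smul r u,
    fun u v₁ v₂ => (hright u).map_add v₁ v₂, fun r u v => (hright u).map_smul r v,
    K * t * Real.exp (K * t) ^ 3 + 1, add_pos_of_nonneg_of_pos (by
      have := hN.nonneg; positivity) one_pos, fun u v => ?_⟩
  refine (hφ.norm_secondVariation_le hS hN ⟨ht, le_rfl⟩ x u v).trans ?_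
  gcongr
  linarith

theorem norm_fderiv_integrand_sub_sub_le (hφ : IsMildFlow S N φ)
    (hS : StronglyContinuousContraction S) (hN : HasBoundedDerivs N K) {T s : ℝ}
    (hs : s ∈ Icc 0 T) (x x' y β : E) :
    ‖fderiv ℝ N (φ s x') (fderiv ℝ (φ s) x' y) - fderiv ℝ N (φ s x) (fderiv ℝ (φ s) x y) -
        (fderiv ℝ (fderiv ℝ N) (φ s x) (fderiv ℝ (φ s) x (x' - x)) (fderiv ℝ (φ s) x y) +
          fderiv ℝ N (φ s x) β)‖ ≤
      K * ‖fderiv ℝ (φ s) x' y - fderiv ℝ (φ s) x y - β‖ +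
        K * Real.exp (K * T) ^ 3 * (1 + 2 * K * T * Real.exp (K * T)) * ‖x' - x‖ ^ 2 * ‖y‖ := by
  set M := Real.exp (K * T)
  set h := x' - x
  set B := fderiv ℝ (fderiv ℝ N) (φ s x)
  set d := fderiv ℝ (φ s) x y
  set d' := fderiv ℝ (φ s) x' y
  set δ := φ s x' - φ s x
  have hK := hN.nonneg
  have hT : 0 ≤ T := hs.1.trans hs.2
  -- each term after the first is a remainder controlled by a first-order estimate
  have hsplit : fderiv ℝ N (φ s x') d' - fderiv ℝ N (φ s x) d - (B (fderiv ℝ (φ s) x h) d +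
      fderiv ℝ N (φ s x) β) = fderiv ℝ N (φ s x) (d' - d - β) +
      (fderiv ℝ N (φ s x') - fderiv ℝ N (φ s x) - B δ) d' + B δ (d' - d) +
      B (δ - fderiv ℝ (φ s) x h) d := by
    simp only [map_sub, sub_apply]; abel
  have hδ : ‖δ‖ ≤ ‖h‖ * M := hφ.norm_sub_le hS hN hs x x'
  have hd : ‖d‖ ≤ ‖y‖ * M := hφ.norm_fderiv_apply_le hS hN hs x y
  have hd' : ‖d'‖ ≤ ‖y‖ * M := hφ.norm_fderiv_apply_le hS hN hs x' y
  have hdd : ‖d' - d‖ ≤ K * T * M ^ 3 * ‖h‖ * ‖y‖ := hφ.norm_fderiv_sub_le hS hN hs x x' y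
  have hδℓ : ‖δ - fderiv ℝ (φ s) x h‖ ≤ K * T * M ^ 3 * ‖h‖ ^ 2 :=
    hφ.norm_sub_sub_fderiv_le hS hN hs x x'
  rw [hsplit]
  refine norm_add₄_le.trans ?_
  have h1 := hN.norm_fderiv_apply_le (φ s x) (d' - d - β)
  have h2 : ‖(fderiv ℝ N (φ s x') - fderiv ℝ N (φ s x) - B δ) d'‖ ≤ K * ‖δ‖ ^ 2 * ‖d'‖ :=
    (ContinuousLinearMap.le_opNorm _ _).trans
      (mul_le_mul_of_nonneg_right (hN.norm_fderiv_sub_sub_le _ _) (norm_nonneg _))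
  have h3 := hN.norm_fderiv_fderiv_apply_le (φ s x) δ (d' - d)
  have h4 := hN.norm_fderiv_fderiv_apply_le (φ s x) (δ - fderiv ℝ (φ s) x h) d
  have h2' : K * ‖δ‖ ^ 2 * ‖d'‖ ≤ K * (‖h‖ * M) ^ 2 * (‖y‖ * M) := by gcongr
  have h3' : K * ‖δ‖ * ‖d' - d‖ ≤ K * (‖h‖ * M) * (K * T * M ^ 3 * ‖h‖ * ‖y‖) := by gcongr
  have h4' : K * ‖δ - fderiv ℝ (φ s) x h‖ * ‖d‖ ≤ K * (K * T * M ^ 3 * ‖h‖ ^ 2) * (‖y‖ * M) := by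
    gcongr
  nlinarith

theorem norm_fderiv_sub_sub_secondVariation_le (hφ : IsMildFlow S N φ)
    (hS : StronglyContinuousContraction S) (hN : HasBoundedDerivs N K) {T t : ℝ}
    (ht : t ∈ Icc 0 T) (x x' y : E) :
    ‖fderiv ℝ (φ t) x' y - fderiv ℝ (φ t) x y - secondVariation S N φ x (x' - x) y t‖ ≤
      K * T * Real.exp (K * T) ^ 4 * (1 + 2 * K * T * Real.exp (K * T)) * ‖x' - x‖ ^ 2 * ‖y‖ := by
  set M := Real.exp (K * T)
  set b := secondVariation S N φ x (x' - x) y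
  set f := fun s => fderiv ℝ (fderiv ℝ N) (φ s x) (fderiv ℝ (φ s) x (x' - x)) (fderiv ℝ (φ s) x y)
  set c := fun s => fderiv ℝ N (φ s x)
  set c' := fun s => fderiv ℝ N (φ s x')
  have hK := hN.nonneg
  have hT : 0 ≤ T := ht.1.trans ht.2
  have hD := hφ.isMildSolution_fderiv hS hN x y
  have hD' := hφ.isMildSolution_fderiv hS hN x' y
  have hb := hφ.isMildSolution_secondVariation hS hN x (x' - x) y
  have hf := hφ.continuousOn_fderiv_fderiv_comp hS hN x (x' - x) y
  have hc := hφ.continuousOn_fderiv_comp hN x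
  have hc' := hφ.continuousOn_fderiv_comp hN x'
  have heq : ∀ τ ∈ Icc 0 T, fderiv ℝ (φ τ) x' y - fderiv ℝ (φ τ) x y - b τ =
      0 + duhamel S (((fun s => c' s (fderiv ℝ (φ s) x' y)) - fun s => c s (fderiv ℝ (φ s) x y))
        - (f + fun s => c s (b s))) τ := by
    intro τ hτ
    have hbτ : b τ = 0 + duhamel S (f + fun s => c s (b s)) τ := by
      rw [zero_add, hS.duhamel_add hf (hc.clm_apply hb.continuousOn) hτ.1]
      exact hb.eq τ hτ.1
    rw [hS.sub_eq_add_duhamel_sub ((hc'.clm_apply hD'.continuousOn).sub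
      (hc.clm_apply hD.continuousOn)) (hf.add (hc.clm_apply hb.continuousOn)) hτ.1
      (hS.sub_eq_add_duhamel_sub (hc'.clm_apply hD'.continuousOn) (hc.clm_apply hD.continuousOn)
        hτ.1 (hD'.eq τ hτ.1) (hD.eq τ hτ.1)) hbτ, sub_self, sub_zero]
  calc _ ≤ (0 + K * M ^ 3 * (1 + 2 * K * T * M) * ‖x' - x‖ ^ 2 * ‖y‖ * T) * M :=
        hS.norm_le_of_eq_add_duhamel
          (v := fun t => fderiv ℝ (φ t) x' y - fderiv ℝ (φ t) x y - b t) hK (by positivity)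
          (((hD'.continuousOn.sub hD.continuousOn).sub hb.continuousOn).mono Icc_subset_Ici_self)
          (fun _ _ => norm_zero.le)
          (fun s hs => hφ.norm_fderiv_integrand_sub_sub_le hS hN hs x x' y (b s)) heq t ht
    _ = _ := by ring

theorem hasFDerivAt_fderiv (hφ : IsMildFlow S N φ) (hS : StronglyContinuousContraction S)
    (hN : HasBoundedDerivs N K) (x : E) {t : ℝ} (ht : 0 ≤ t) :
    HasFDerivAt (fderiv ℝ (φ t))
      (hφ.isBoundedBilinearMap_secondVariation hS hN x ht).toContinuousLinearMap x := by
  have hK := hN.nonneg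
  refine hasFDerivAt_of_norm_sub_le_sq
    (C := K * t * Real.exp (K * t) ^ 4 * (1 + 2 * K * t * Real.exp (K * t)))
    fun x' => ContinuousLinearMap.opNorm_le_bound _ (by positivity) fun y => ?_
  calc ‖fderiv ℝ (φ t) x' y - fderiv ℝ (φ t) x y - secondVariation S N φ x (x' - x) y t‖
      ≤ _ := hφ.norm_fderiv_sub_sub_secondVariation_le hS hN ⟨ht, le_rfl⟩ x x' y
    _ = _ := by ring

end IsMildFlow

end Flow

theorem stmt_2_general
    {H : Type} [NormedAddCommGroup H] [InnerProductSpace ℝ H]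
    {E : Type} [NormedAddCommGroup E] [NormedSpace ℝ E] [CompleteSpace E]
    (N : E → E) (hN : ContDiff ℝ 3 N)
    (K : ℝ)
    (hN1 : ∀ x : E, ‖fderiv ℝ N x‖ ≤ K)
    (hN2 : ∀ x : E, ‖fderiv ℝ (fderiv ℝ N) x‖ ≤ K)
    (hN3 : ∀ x : E, ‖fderiv ℝ (fderiv ℝ (fderiv ℝ N)) x‖ ≤ K)
    (Λ : ℝ → H →L[ℝ] H) (ΛE : ℝ → E →L[ℝ] E)
    (hstrongE : ∀ x : E, ContinuousOn (fun t => ΛE t x) (Set.Ici (0:ℝ)))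
    (ω : ℝ) (hω : ω < 0)
    (hΛbound : ∀ t : ℝ, 0 ≤ t → max ‖Λ t‖ ‖ΛE t‖ ≤ Real.exp (ω * t))
    (φ : ℝ → E → E)
    (hφcont : ∀ x : E, ContinuousOn (fun t => φ t x) (Set.Ici (0:ℝ)))
    (hφ : ∀ x : E, ∀ t : ℝ, 0 ≤ t →
      φ t x = ΛE t x + ∫ s in (0:ℝ)..t, ΛE (t - s) (N (φ s x)))
    :
    ∀ x₀ y z : E, ∃ a : ℝ → E,
      (a 0 = 0 ∧ ContinuousOn a (Set.Ici 0) ∧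
        ∀ t : ℝ, 0 ≤ t →
          a t = ∫ s in (0:ℝ)..t, ΛE (t - s)
            (fderiv ℝ N (φ s x₀) (a s) +
              fderiv ℝ (fderiv ℝ N) (φ s x₀) (fderiv ℝ (φ s) x₀ y) (fderiv ℝ (φ s) x₀ z))) ∧
      (∀ a' : ℝ → E,
        (a' 0 = 0 ∧ ContinuousOn a' (Set.Ici 0) ∧
          ∀ t : ℝ, 0 ≤ t →
            a' t = ∫ s in (0:ℝ)..t, ΛE (t - s)
              (fderiv ℝ N (φ s x₀) (a' s) +
                fderiv ℝ (fderiv ℝ N) (φ s x₀) (fderiv ℝ (φ s) x₀ y) (fderiv ℝ (φ s) x₀ z))) →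
        ∀ t : ℝ, 0 ≤ t → a' t = a t) ∧
      ∀ t : ℝ, 0 ≤ t →
        (∀ᶠ x in nhds x₀, DifferentiableAt ℝ (φ t) x) ∧
        ∃ L : E →L[ℝ] E →L[ℝ] E,
          HasFDerivAt (fderiv ℝ (φ t)) L x₀ ∧ L y z = a t := by
  intro x₀ y z
  have hS : StronglyContinuousContraction ΛE := ⟨hstrongE, fun t ht =>
    (le_max_right _ _).trans ((hΛbound t ht).trans
      (Real.exp_le_one_iff.2 (mul_nonpos_of_nonpos_of_nonneg hω.le ht)))⟩
  have hN' : HasBoundedDerivs N K := ⟨hN, hN1, hN2, hN3⟩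
  have hφ' : IsMildFlow ΛE N φ := ⟨hφcont, hφ⟩
  have hc := hφ'.continuousOn_fderiv_comp hN' x₀
  have hiff := fun a => hS.isMildSolution_duhamel_iff (v := a) hc
    (hφ'.continuousOn_fderiv_fderiv_comp hS hN' x₀ y z)
  have hb := hφ'.isMildSolution_secondVariation hS hN' x₀ y z
  refine ⟨secondVariation ΛE N φ x₀ y z, ⟨?_, hb.continuousOn, (hiff _ hb.continuousOn).1 hb⟩,
    fun a' ⟨_, ha'c, ha'⟩ t ht => ((hiff a' ha'c).2 ha').eqOn hS hc hb (fun _ _ => rfl) ht,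
    fun t ht => ⟨Eventually.of_forall fun x => (hφ'.hasFDerivAt hS hN' x ht).differentiableAt,
      _, hφ'.hasFDerivAt_fderiv hS hN' x₀ ht, rfl⟩⟩
  rw [hb.eq 0 le_rfl]
  simp [duhamel]

theorem stmt_2
    {H : Type} [NormedAddCommGroup H] [InnerProductSpace ℝ H]
    [TopologicalSpace.SeparableSpace H]
    {E : Type} [NormedAddCommGroup E] [NormedSpace ℝ E] [CompleteSpace E]
    (ι : E →L[ℝ] H) (hι : Function.Injective ι)
    (N : E → E) (hN : ContDiff ℝ 3 N)
    (K : ℝ)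
    (hN1 : ∀ x : E, ‖fderiv ℝ N x‖ ≤ K)
    (hN2 : ∀ x : E, ‖fderiv ℝ (fderiv ℝ N) x‖ ≤ K)
    (hN3 : ∀ x : E, ‖fderiv ℝ (fderiv ℝ (fderiv ℝ N)) x‖ ≤ K)
    (Λ : ℝ → H →L[ℝ] H) (ΛE : ℝ → E →L[ℝ] E)
    (hcompat : ∀ (t : ℝ) (x : E), ι (ΛE t x) = Λ t (ι x))
    (hΛ0 : Λ 0 = ContinuousLinearMap.id ℝ H)
    (hΛadd : ∀ s t : ℝ, 0 ≤ s → 0 ≤ t → Λ (s + t) = (Λ s).comp (Λ t))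
    (hΛE0 : ΛE 0 = ContinuousLinearMap.id ℝ E)
    (hΛEadd : ∀ s t : ℝ, 0 ≤ s → 0 ≤ t → ΛE (s + t) = (ΛE s).comp (ΛE t))
    (hstrong : ∀ x : H, ContinuousOn (fun t => Λ t x) (Set.Ici (0:ℝ)))
    (hstrongE : ∀ x : E, ContinuousOn (fun t => ΛE t x) (Set.Ici (0:ℝ)))
    (ω : ℝ) (hω : ω < 0)
    (hΛbound : ∀ t : ℝ, 0 ≤ t → max ‖Λ t‖ ‖ΛE t‖ ≤ Real.exp (ω * t))
    (φ : ℝ → E → E)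
    (hφcont : ∀ x : E, ContinuousOn (fun t => φ t x) (Set.Ici (0:ℝ)))
    (hφ : ∀ x : E, ∀ t : ℝ, 0 ≤ t →
      φ t x = ΛE t x + ∫ s in (0:ℝ)..t, ΛE (t - s) (N (φ s x)))
    :
    ∀ x₀ y z : E, ∃ a : ℝ → E,
      (a 0 = 0 ∧ ContinuousOn a (Set.Ici 0) ∧
        ∀ t : ℝ, 0 ≤ t →
          a t = ∫ s in (0:ℝ)..t, ΛE (t - s)
            (fderiv ℝ N (φ s x₀) (a s) +
              fderiv ℝ (fderiv ℝ N) (φ s x₀) (fderiv ℝ (φ s) x₀ y) (fderiv ℝ (φ s) x₀ z))) ∧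
      (∀ a' : ℝ → E,
        (a' 0 = 0 ∧ ContinuousOn a' (Set.Ici 0) ∧
          ∀ t : ℝ, 0 ≤ t →
            a' t = ∫ s in (0:ℝ)..t, ΛE (t - s)
              (fderiv ℝ N (φ s x₀) (a' s) +
                fderiv ℝ (fderiv ℝ N) (φ s x₀) (fderiv ℝ (φ s) x₀ y) (fderiv ℝ (φ s) x₀ z))) →
        ∀ t : ℝ, 0 ≤ t → a' t = a t) ∧
      ∀ t : ℝ, 0 ≤ t →
        (∀ᶠ x in nhds x₀, DifferentiableAt ℝ (φ t) x) ∧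
        ∃ L : E →L[ℝ] E →L[ℝ] E,
          HasFDerivAt (fderiv ℝ (φ t)) L x₀ ∧ L y z = a t :=
  stmt_2_general N hN K hN1 hN2 hN3 Λ ΛE hstrongE ω hω hΛbound φ hφcont hφ
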